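/- The map θ : {x ∈ S² : x₁ > 0} × S¹ → ℝ⁴ defined by θ((x₁,x₂,x₃),(y₁,y₂)) = (x₂, x₃, y₁·√(2 − x₂² − x₃²), y₂·√(2 − x₂² − x₃²))/√2 takes values in S³, is a topological embedding, and its image equals the open subset {z ∈ S³ : z₁² + z₂² < 1/2} of S³. -/

import Mathlib

/- STATEMENT 2: The map θ : {x ∈ S² : x₁ > 0} × S¹ → ℝ⁴,
   θ((x₁,x₂,x₃),(y₁,y₂)) = (x₂, x₃, y₁√(2−x₂²−x₃²), y₂√(2−x₂²−x₃²))/√2,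
   takes values in S³, is a topological embedding, and its image equals the
   open subset {z ∈ S³ : z₁² + z₂² < 1/2} of S³. -/

noncomputable section

abbrev E (n : ℕ) : Type := EuclideanSpace ℝ (Fin n)

def theta (x : E 3) (y : E 2) : E 4 :=
  (Real.sqrt 2)⁻¹ •
    ((WithLp.equiv 2 (Fin 4 → ℝ)).symm
      ![x 1, x 2,
        y 0 * Real.sqrt (2 - (x 1 ^ 2 + x 2 ^ 2)),
        y 1 * Real.sqrt (2 - (x 1 ^ 2 + x 2 ^ 2))])

/-- The open upper hemisphere `Int D²₊` of `S²`. -/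
def upperHemisphere : Set (E 3) :=
  {x | x ∈ Metric.sphere (0 : E 3) 1 ∧ 0 < x 0}

/-
`theta` has an explicit left inverse (coordinates indexed from `0`, as in Lean):
`x = (√(1 - 2 (z₀² + z₁²)), √2 z₀, √2 z₁)` and `y = (z₂, z₃) / √(1 - (z₀² + z₁²))`.
Bounding the radicand of the denominator below by `1/2` makes this a continuous map on all
of `ℝ⁴`, and a continuous map with a continuous left inverse is an embedding. On
`{z ∈ S³ : z₀² + z₁² < 1/2}` the same formula is a right inverse with values in the domain,
which identifies the image: `x₀ > 0` on the sphere is exactly `x₁² + x₂² < 1`, that is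
`z₀² + z₁² < 1/2`.
-/

open Real

lemma EuclideanSpace.mem_sphere_zero_one_iff {ι : Type*} [Fintype ι] (z : EuclideanSpace ℝ ι) :
    z ∈ Metric.sphere 0 1 ↔ ∑ i, z i ^ 2 = 1 := by
  simp [EuclideanSpace.sphere_zero_eq 1 zero_le_one]

lemma sqrt_two_sub_div_sqrt_two (a : ℝ) : √(2 - a) / √2 = √(1 - a / 2) := by
  rw [← sqrt_div' _ zero_le_two, sub_div, div_self two_ne_zero]

lemma max_one_sub_one_half_of_lt {a : ℝ} (ha : a < 1 / 2) : max (1 - a) (1 / 2) = 1 - a :=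
  max_eq_left (by linarith)

lemma theta_apply_zero (x : E 3) (y : E 2) : theta x y 0 = x 1 / √2 := by
  simp [theta, div_eq_inv_mul]

lemma theta_apply_one (x : E 3) (y : E 2) : theta x y 1 = x 2 / √2 := by
  simp [theta, div_eq_inv_mul]

lemma theta_apply_two (x : E 3) (y : E 2) :
    theta x y 2 = y 0 * √(1 - (x 1 ^ 2 + x 2 ^ 2) / 2) := by
  simp [theta, ← sqrt_two_sub_div_sqrt_two]
  ring

lemma theta_apply_three (x : E 3) (y : E 2) :
    theta x y 3 = y 1 * √(1 - (x 1 ^ 2 + x 2 ^ 2) / 2) := by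
  simp [theta, ← sqrt_two_sub_div_sqrt_two]
  ring

lemma theta_apply_zero_sq_add_one_sq (x : E 3) (y : E 2) :
    theta x y 0 ^ 2 + theta x y 1 ^ 2 = (x 1 ^ 2 + x 2 ^ 2) / 2 := by
  rw [theta_apply_zero, theta_apply_one, div_pow, div_pow, sq_sqrt zero_le_two, add_div]

lemma continuous_theta : Continuous (fun q : E 3 × E 2 => theta q.1 q.2) := by
  simp only [theta, WithLp.equiv_symm_apply]
  fun_prop

lemma sq_add_sq_lt_one_of_mem_upperHemisphere {x : E 3} (hx : x ∈ upperHemisphere) :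
    x 1 ^ 2 + x 2 ^ 2 < 1 := by
  obtain ⟨hx, hx0⟩ := hx
  rw [EuclideanSpace.mem_sphere_zero_one_iff, Fin.sum_univ_three] at hx
  nlinarith

lemma sqrt_one_sub_sq_add_sq_of_mem_upperHemisphere {x : E 3} (hx : x ∈ upperHemisphere) :
    √(1 - (x 1 ^ 2 + x 2 ^ 2)) = x 0 := by
  obtain ⟨hx, hx0⟩ := hx
  rw [EuclideanSpace.mem_sphere_zero_one_iff, Fin.sum_univ_three] at hx
  rw [← sqrt_sq hx0.le]
  congr 1
  linarith

lemma theta_mem_sphere {x : E 3} {y : E 2} (hx : x 1 ^ 2 + x 2 ^ 2 ≤ 2)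
    (hy : y ∈ Metric.sphere (0 : E 2) 1) : theta x y ∈ Metric.sphere (0 : E 4) 1 := by
  rw [EuclideanSpace.mem_sphere_zero_one_iff, Fin.sum_univ_two] at hy
  rw [EuclideanSpace.mem_sphere_zero_one_iff, Fin.sum_univ_four, theta_apply_two,
    theta_apply_three, mul_pow, mul_pow, sq_sqrt (by linarith)]
  linear_combination theta_apply_zero_sq_add_one_sq x y + (1 - (x 1 ^ 2 + x 2 ^ 2) / 2) * hy

lemma theta_apply_zero_sq_add_one_sq_lt {x : E 3} (hx : x ∈ upperHemisphere) (y : E 2) :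
    theta x y 0 ^ 2 + theta x y 1 ^ 2 < 1 / 2 := by
  rw [theta_apply_zero_sq_add_one_sq]
  linarith [sq_add_sq_lt_one_of_mem_upperHemisphere hx]

def thetaInv (z : E 4) : E 3 × E 2 :=
  (!₂[√(1 - 2 * (z 0 ^ 2 + z 1 ^ 2)), √2 * z 0, √2 * z 1],
    (√(max (1 - (z 0 ^ 2 + z 1 ^ 2)) (1 / 2)))⁻¹ • !₂[z 2, z 3])

section thetaInv

variable (z : E 4)

lemma thetaInv_fst_apply_zero : (thetaInv z).1 0 = √(1 - 2 * (z 0 ^ 2 + z 1 ^ 2)) := by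
  simp [thetaInv]

lemma thetaInv_fst_apply_one : (thetaInv z).1 1 = √2 * z 0 := by
  simp [thetaInv]

lemma thetaInv_fst_apply_two : (thetaInv z).1 2 = √2 * z 1 := by
  simp [thetaInv]

lemma thetaInv_snd_apply_zero :
    (thetaInv z).2 0 = z 2 / √(max (1 - (z 0 ^ 2 + z 1 ^ 2)) (1 / 2)) := by
  simp [thetaInv, div_eq_inv_mul]

lemma thetaInv_snd_apply_one :
    (thetaInv z).2 1 = z 3 / √(max (1 - (z 0 ^ 2 + z 1 ^ 2)) (1 / 2)) := by
  simp [thetaInv, div_eq_inv_mul]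

lemma thetaInv_fst_sq_add_sq :
    (thetaInv z).1 1 ^ 2 + (thetaInv z).1 2 ^ 2 = 2 * (z 0 ^ 2 + z 1 ^ 2) := by
  rw [thetaInv_fst_apply_one, thetaInv_fst_apply_two, mul_pow, mul_pow, sq_sqrt zero_le_two]
  ring

end thetaInv

lemma continuous_thetaInv : Continuous thetaInv := by
  have hpos (z : E 4) : √(max (1 - (z 0 ^ 2 + z 1 ^ 2)) (1 / 2)) ≠ 0 :=
    (sqrt_pos.2 (lt_max_of_lt_right one_half_pos)).ne'
  unfold thetaInv
  fun_prop (disch := exact hpos _)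

lemma thetaInv_theta {x : E 3} (hx : x ∈ upperHemisphere) (y : E 2) :
    thetaInv (theta x y) = (x, y) := by
  have hlt := theta_apply_zero_sq_add_one_sq_lt hx y
  have hθ := theta_apply_zero_sq_add_one_sq x y
  have hmax := max_one_sub_one_half_of_lt hlt
  rw [hθ] at hlt hmax
  have hr : √(1 - (x 1 ^ 2 + x 2 ^ 2) / 2) ≠ 0 := (sqrt_pos.2 (by linarith)).ne'
  have h2 : √2 ≠ 0 := by positivity
  ext i <;> fin_cases i <;> dsimp only [Fin.reduceFinMk]
  · rw [thetaInv_fst_apply_zero, hθ, mul_div_cancel₀ _ two_ne_zero,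
      sqrt_one_sub_sq_add_sq_of_mem_upperHemisphere hx]
  · rw [thetaInv_fst_apply_one, theta_apply_zero, mul_div_cancel₀ _ h2]
  · rw [thetaInv_fst_apply_two, theta_apply_one, mul_div_cancel₀ _ h2]
  · rw [thetaInv_snd_apply_zero, hθ, hmax, theta_apply_two, mul_div_cancel_right₀ _ hr]
  · rw [thetaInv_snd_apply_one, hθ, hmax, theta_apply_three, mul_div_cancel_right₀ _ hr]

lemma theta_thetaInv {z : E 4} (hz : z 0 ^ 2 + z 1 ^ 2 < 1 / 2) :
    theta (thetaInv z).1 (thetaInv z).2 = z := by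
  have hmax := max_one_sub_one_half_of_lt hz
  have hr : √(1 - (z 0 ^ 2 + z 1 ^ 2)) ≠ 0 := (sqrt_pos.2 (by linarith)).ne'
  have h2 : √2 ≠ 0 := by positivity
  have hq :
      1 - ((thetaInv z).1 1 ^ 2 + (thetaInv z).1 2 ^ 2) / 2 = 1 - (z 0 ^ 2 + z 1 ^ 2) := by
    rw [thetaInv_fst_sq_add_sq]; ring
  ext i; fin_cases i <;> dsimp only [Fin.reduceFinMk]
  · rw [theta_apply_zero, thetaInv_fst_apply_one, mul_div_cancel_left₀ _ h2]
  · rw [theta_apply_one, thetaInv_fst_apply_two, mul_div_cancel_left₀ _ h2]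
  · rw [theta_apply_two, thetaInv_snd_apply_zero, hq, hmax, div_mul_cancel₀ _ hr]
  · rw [theta_apply_three, thetaInv_snd_apply_one, hq, hmax, div_mul_cancel₀ _ hr]

lemma thetaInv_fst_mem_upperHemisphere {z : E 4} (hz : z 0 ^ 2 + z 1 ^ 2 < 1 / 2) :
    (thetaInv z).1 ∈ upperHemisphere := by
  refine ⟨?_, ?_⟩
  · rw [EuclideanSpace.mem_sphere_zero_one_iff, Fin.sum_univ_three, add_assoc,
      thetaInv_fst_sq_add_sq, thetaInv_fst_apply_zero, sq_sqrt (by linarith)]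
    ring
  · rw [thetaInv_fst_apply_zero]
    exact sqrt_pos.2 (by linarith)

lemma thetaInv_snd_mem_sphere {z : E 4} (hz : z ∈ Metric.sphere (0 : E 4) 1)
    (hlt : z 0 ^ 2 + z 1 ^ 2 < 1 / 2) : (thetaInv z).2 ∈ Metric.sphere (0 : E 2) 1 := by
  rw [EuclideanSpace.mem_sphere_zero_one_iff, Fin.sum_univ_four] at hz
  have hmax := max_one_sub_one_half_of_lt hlt
  rw [EuclideanSpace.mem_sphere_zero_one_iff, Fin.sum_univ_two, thetaInv_snd_apply_zero,
    thetaInv_snd_apply_one, hmax, div_pow, div_pow, sq_sqrt (by linarith), ← add_div,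
    div_eq_one_iff_eq (by linarith)]
  linarith

theorem statement2 :
    (∀ p : upperHemisphere × (Metric.sphere (0 : E 2) 1),
        theta p.1 p.2 ∈ Metric.sphere (0 : E 4) 1) ∧
    Topology.IsEmbedding
      (fun p : upperHemisphere × (Metric.sphere (0 : E 2) 1) => theta p.1 p.2) ∧
    Set.range
      (fun p : upperHemisphere × (Metric.sphere (0 : E 2) 1) => theta p.1 p.2)
      = {z : E 4 | z ∈ Metric.sphere (0 : E 4) 1 ∧ z 0 ^ 2 + z 1 ^ 2 < 1 / 2} := by
  have hmaps (p : upperHemisphere × (Metric.sphere (0 : E 2) 1)) :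
      theta p.1 p.2 ∈ Metric.sphere (0 : E 4) 1 ∧
        theta p.1 p.2 0 ^ 2 + theta p.1 p.2 1 ^ 2 < 1 / 2 :=
    ⟨theta_mem_sphere ((sq_add_sq_lt_one_of_mem_upperHemisphere p.1.2).le.trans one_le_two) p.2.2,
      theta_apply_zero_sq_add_one_sq_lt p.1.2 p.2⟩
  refine ⟨fun p => (hmaps p).1, ?_, ?_⟩
  · have hleft : thetaInv ∘ (fun p : upperHemisphere × (Metric.sphere (0 : E 2) 1) =>
        theta p.1 p.2) = Prod.map Subtype.val Subtype.val :=
      funext fun p => thetaInv_theta p.1.2 p.2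
    refine .of_comp
      (continuous_theta.comp (continuous_subtype_val.prodMap continuous_subtype_val))
      continuous_thetaInv ?_
    rw [hleft]
    exact .prodMap .subtypeVal .subtypeVal
  · refine (Set.range_subset_iff.2 hmaps).antisymm fun z ⟨hz, hlt⟩ => ?_
    exact ⟨(⟨_, thetaInv_fst_mem_upperHemisphere hlt⟩,
      ⟨_, thetaInv_snd_mem_sphere hz hlt⟩), theta_thetaInv hlt⟩
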